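/- There is a universal constant C > 0 such that: for every k ∈ ℝ with |k| ≥ 1, every t ≥ 0, and all functions ψ, w : [−1,1] → ℂ with ψ twice continuously differentiable, w twice continuously differentiable, ψ(±1) = 0, w(±1) = 0, and ψ''(y) − k² ψ(y) = −w(y) on (−1,1), one has |k|⁴ ‖ψ‖_{L²} ≤ C (1+t)^{−2} ( ‖(e_{k,t} w)''‖²_{L²} + k² ‖(e_{k,t} w)'‖²_{L²} + k⁴ ‖w‖²_{L²} )^{1/2}, where e_{k,t}(y) = e^{i k y t} and derivatives of e_{k,t} w are taken in y. -/

import Mathlib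

/-!
Let `χ` solve `χ'' - k²χ = -conj ψ` with Dirichlet conditions. Self-adjointness of `∂_y² - k²`
gives `‖ψ‖² = ∫ w χ = ∫ e^{-ikty} (e^{ikty} w) χ`, and since `(e^{ikty} w) χ` vanishes to first
order at `±1`, integrating by parts twice against the phase trades a factor `(kt)²` for two
derivatives on `(e^{ikty} w) χ`. The elliptic bounds `k²‖χ‖, |k|‖χ'‖, ‖χ''‖/2 ≤ ‖ψ‖` turn this into
`k⁴t²‖ψ‖ ≤ 5 ‖(∂_y,k)²(e^{ikty} w)‖`, the elliptic bound `k²‖ψ‖ ≤ ‖w‖` gives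
`k⁴‖ψ‖ ≤ ‖(∂_y,k)²(e^{ikty} w)‖`, and `(1+t)² ≤ 2(1+t²)` combines the two.
-/

open Set

/-- The squared `L²` norm of a function on the interval `(-1, 1)`. -/
noncomputable def L2sq (h : ℝ → ℂ) : ℝ :=
  ∫ y in (-1 : ℝ)..1, ‖h y‖ ^ 2

/-- The function `y ↦ e^{ikyt} w(y)`. -/
noncomputable def ew (k t : ℝ) (w : ℝ → ℂ) : ℝ → ℂ :=
  fun y => Complex.exp (Complex.I * (k : ℂ) * (y : ℂ) * (t : ℂ)) * w y

open intervalIntegral Complex ComplexConjugate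

section SecondDerivative

variable {f g f₁ f₂ : ℝ → ℂ}

lemma ContDiff.contDiff_one_deriv (hf : ContDiff ℝ 2 f) : ContDiff ℝ 1 (deriv f) :=
  hf.iterate_deriv' 1 1

lemma ContDiff.continuous_deriv_deriv (hf : ContDiff ℝ 2 f) : Continuous (deriv (deriv f)) :=
  hf.contDiff_one_deriv.continuous_deriv le_rfl

lemma ContDiff.hasDerivAt (hf : ContDiff ℝ 2 f) (y : ℝ) : HasDerivAt f (deriv f y) y :=
  (hf.differentiable two_ne_zero y).hasDerivAt

lemma ContDiff.hasDerivAt_deriv (hf : ContDiff ℝ 2 f) (y : ℝ) :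
    HasDerivAt (deriv f) (deriv (deriv f) y) y :=
  (hf.contDiff_one_deriv.differentiable one_ne_zero y).hasDerivAt

lemma contDiff_two_of_hasDerivAt (h₁ : ∀ y, HasDerivAt f (f₁ y) y)
    (h₂ : ∀ y, HasDerivAt f₁ (f₂ y) y) (hc : Continuous f₂) : ContDiff ℝ 2 f := by
  have hd : deriv f = f₁ := funext fun y => (h₁ y).deriv
  have hd₁ : deriv f₁ = f₂ := funext fun y => (h₂ y).deriv
  refine (contDiff_succ_iff_deriv (n := 1)).2 ⟨fun y => (h₁ y).differentiableAt, by simp, ?_⟩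
  rw [hd]
  exact contDiff_one_iff_deriv.2 ⟨fun y => (h₂ y).differentiableAt, hd₁ ▸ hc⟩

lemma deriv_deriv_of_hasDerivAt (h₁ : ∀ y, HasDerivAt f (f₁ y) y)
    (h₂ : ∀ y, HasDerivAt f₁ (f₂ y) y) : deriv (deriv f) = f₂ := by
  rw [funext fun y => (h₁ y).deriv]
  exact funext fun y => (h₂ y).deriv

lemma deriv_mul_of_contDiff_two (hf : ContDiff ℝ 2 f) (hg : ContDiff ℝ 2 g) (y : ℝ) :
    deriv (fun y => f y * g y) y = deriv f y * g y + f y * deriv g y :=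
  ((hf.hasDerivAt y).mul (hg.hasDerivAt y)).deriv

lemma deriv_deriv_mul (hf : ContDiff ℝ 2 f) (hg : ContDiff ℝ 2 g) :
    deriv (deriv fun y => f y * g y) = fun y =>
      deriv (deriv f) y * g y + 2 * (deriv f y * deriv g y) + f y * deriv (deriv g) y := by
  refine deriv_deriv_of_hasDerivAt (fun y => (hf.hasDerivAt y).mul (hg.hasDerivAt y))
    fun y => (((hf.hasDerivAt_deriv y).mul (hg.hasDerivAt y)).add
      ((hf.hasDerivAt y).mul (hg.hasDerivAt_deriv y))).congr_deriv ?_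
  ring

theorem integral_mul_deriv_deriv_sub_deriv_deriv_mul (hf : ContDiff ℝ 2 f)
    (hg : ContDiff ℝ 2 g) (a b : ℝ) :
    ∫ x in a..b, (f x * deriv (deriv g) x - deriv (deriv f) x * g x) =
      (f b * deriv g b - deriv f b * g b) - (f a * deriv g a - deriv f a * g a) := by
  refine integral_eq_sub_of_hasDerivAt (f := fun x => f x * deriv g x - deriv f x * g x)
    (fun x _ => ?_) (Continuous.intervalIntegrable ?_ _ _)
  · refine (((hf.hasDerivAt x).mul (hg.hasDerivAt_deriv x)).sub
      ((hf.hasDerivAt_deriv x).mul (hg.hasDerivAt x))).congr_deriv ?_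
    ring
  · exact (hf.continuous.mul hg.continuous_deriv_deriv).sub
      (hf.continuous_deriv_deriv.mul hg.continuous)

end SecondDerivative

noncomputable def L2norm (h : ℝ → ℂ) : ℝ := √(L2sq h)

lemma L2sq_nonneg (h : ℝ → ℂ) : 0 ≤ L2sq h :=
  integral_nonneg (by norm_num) fun _ _ => by positivity

lemma L2norm_nonneg (h : ℝ → ℂ) : 0 ≤ L2norm h := Real.sqrt_nonneg _

lemma L2norm_sq (h : ℝ → ℂ) : L2norm h ^ 2 = L2sq h := Real.sq_sqrt (L2sq_nonneg h)

lemma L2norm_congr_norm {a b : ℝ → ℂ} (h : ∀ y, ‖a y‖ = ‖b y‖) : L2norm a = L2norm b := by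
  simp only [L2norm, L2sq, h]

open MeasureTheory in
lemma norm_integral_mul_le {a b : ℝ → ℂ} (ha : Continuous a) (hb : Continuous b) :
    ‖∫ y in (-1 : ℝ)..1, a y * b y‖ ≤ L2norm a * L2norm b := by
  have hmem : ∀ {f : ℝ → ℂ}, Continuous f →
      MemLp f (ENNReal.ofReal 2) (volume.restrict (Ioc (-1 : ℝ) 1)) := fun hf => by
    rw [show ENNReal.ofReal 2 = 2 by norm_num, memLp_two_iff_integrable_sq_norm
      hf.aestronglyMeasurable]
    exact ((hf.norm.pow 2).integrableOn_Icc).mono_set Ioc_subset_Icc_self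
  have hL2 : ∀ f : ℝ → ℂ,
      L2norm f = (∫ y in Ioc (-1 : ℝ) 1, ‖f y‖ ^ (2 : ℝ)) ^ (1 / 2 : ℝ) := fun f => by
    simp only [L2norm, L2sq, integral_of_le (show (-1 : ℝ) ≤ 1 by norm_num), Real.rpow_two,
      Real.sqrt_eq_rpow]
  calc ‖∫ y in (-1 : ℝ)..1, a y * b y‖ ≤ ∫ y in Ioc (-1 : ℝ) 1, ‖a y‖ * ‖b y‖ := by
        rw [integral_of_le (by norm_num)]
        simpa only [norm_mul] using norm_integral_le_integral_norm (fun y => a y * b y)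
    _ ≤ L2norm a * L2norm b := by
        rw [hL2, hL2]
        exact integral_mul_norm_le_Lp_mul_Lq Real.HolderConjugate.two_two (hmem ha) (hmem hb)

lemma integral_mul_conj_eq_L2sq (h : ℝ → ℂ) :
    ∫ y in (-1 : ℝ)..1, h y * conj (h y) = L2sq h := by
  simp only [mul_conj', ← ofReal_pow, intervalIntegral.integral_ofReal, L2sq]

lemma integral_deriv_deriv_mul_conj {f : ℝ → ℂ} (hf : ContDiff ℝ 2 f) (hl : f (-1) = 0)
    (hr : f 1 = 0) :
    ∫ y in (-1 : ℝ)..1, deriv (deriv f) y * conj (f y) = -(L2sq (deriv f) : ℂ) := by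
  have hf' : Continuous (deriv f) := hf.continuous_deriv one_le_two
  have hparts := integral_deriv_mul_eq_sub (a := -1) (b := 1)
    (fun y _ => hf.hasDerivAt_deriv y) (fun y _ => (hf.hasDerivAt y).star)
    (hf.continuous_deriv_deriv.intervalIntegrable _ _)
    ((continuous_star.comp hf').intervalIntegrable _ _)
  rw [integral_add (f := fun y => deriv (deriv f) y * star (f y))
    (g := fun y => deriv f y * star (deriv f y))
    ((hf.continuous_deriv_deriv.mul (continuous_star.comp hf.continuous)).intervalIntegrable _ _)
    ((hf'.mul (continuous_star.comp hf')).intervalIntegrable _ _), hl, hr] at hparts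
  simp only [star_zero, mul_zero, sub_zero, Complex.star_def] at hparts
  linear_combination hparts - integral_mul_conj_eq_L2sq (deriv f)

lemma hasDerivAt_cexp_mul (c : ℂ) (y : ℝ) :
    HasDerivAt (fun y : ℝ => exp (c * y)) (c * exp (c * y)) y := by
  simpa [mul_comm] using ((hasDerivAt_id (y : ℂ)).const_mul c).cexp.comp_ofReal

/-- Duhamel's formula for the solution of `u' = c u + h`, `u (-1) = 0`. -/
noncomputable def duhamel (c : ℂ) (h : ℝ → ℂ) (y : ℝ) : ℂ :=
  exp (c * y) * ∫ x in (-1 : ℝ)..y, exp (-(c * x)) * h x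

section Duhamel

variable {c : ℂ} {h : ℝ → ℂ}

lemma duhamel_neg_one : duhamel c h (-1) = 0 := by
  simp [duhamel]

lemma hasDerivAt_duhamel (hh : Continuous h) (y : ℝ) :
    HasDerivAt (duhamel c h) (c * duhamel c h y + h y) y := by
  have hint : HasDerivAt (fun y => ∫ x in (-1 : ℝ)..y, exp (-(c * x)) * h x)
      (exp (-(c * y)) * h y) y :=
    (Continuous.integral_hasStrictDerivAt (by fun_prop) _ _).hasDerivAt
  refine ((hasDerivAt_cexp_mul c y).mul hint).congr_deriv ?_
  simp [duhamel, ← mul_assoc, ← exp_add]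

lemma continuous_duhamel (hh : Continuous h) : Continuous (duhamel c h) :=
  continuous_iff_continuousAt.2 fun y => (hasDerivAt_duhamel hh y).continuousAt

/-- The factorisation `∂² - k² = (∂ - k)(∂ + k)`, with `φ = duhamel (-k) v` solving
`(∂ + k) φ = v`. -/
lemma hasDerivAt_neg_mul_duhamel_add {k : ℂ} {v g : ℝ → ℂ} (hv : Continuous v)
    (hv' : ∀ y, HasDerivAt v (k * v y - g y) y) (y : ℝ) :
    HasDerivAt (fun y => -k * duhamel (-k) v y + v y) (k ^ 2 * duhamel (-k) v y - g y) y :=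
  (((hasDerivAt_duhamel hv y).const_mul (-k)).add (hv' y)).congr_deriv (by ring)

end Duhamel

theorem exists_dirichlet_solution (k : ℝ) {g : ℝ → ℂ} (hg : Continuous g) :
    ∃ φ : ℝ → ℂ, ContDiff ℝ 2 φ ∧ φ (-1) = 0 ∧ φ 1 = 0 ∧
      ∀ y, deriv (deriv φ) y - (k : ℂ) ^ 2 * φ y = -g y := by
  set v := duhamel k (-g)
  have hvc : Continuous v := continuous_duhamel hg.neg
  have hv : ∀ y, HasDerivAt v (k * v y - g y) y := fun y =>
    (hasDerivAt_duhamel hg.neg y).congr_deriv (by simp only [v, Pi.neg_apply]; ring)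
  set e : ℝ → ℂ := fun y => exp (k * y)
  have hec : Continuous e := by fun_prop
  have he : ∀ y, HasDerivAt e (k * e y - 0) y := fun y => by
    simpa using hasDerivAt_cexp_mul k y
  set φ₀ := duhamel (-k) v
  -- a homogeneous solution with `H (-1) = 0` and `H 1 = e^{-k} ∫ e^{2kx} dx > 0`
  set H := duhamel (-k) e
  have hH : H 1 ≠ 0 := by
    have hint : ∫ x in (-1 : ℝ)..1, exp (-(-(k : ℂ) * x)) * e x =
        ((∫ x in (-1 : ℝ)..1, Real.exp (2 * k * x) : ℝ) : ℂ) := by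
      rw [← intervalIntegral.integral_ofReal]
      refine integral_congr fun x _ => ?_
      simp only [e, ← exp_add, ofReal_exp]
      push_cast
      ring_nf
    simp only [H, duhamel, hint]
    exact mul_ne_zero (exp_ne_zero _) (ofReal_ne_zero.2 (intervalIntegral_pos_of_pos
      ((by fun_prop : Continuous fun x => Real.exp (2 * k * x)).intervalIntegrable _ _)
      (fun _ => Real.exp_pos _) (by norm_num)).ne')
  set r := φ₀ 1 / H 1
  have h₁ : ∀ y, HasDerivAt (fun y => φ₀ y - r * H y)
      ((-k * φ₀ y + v y) - r * (-k * H y + e y)) y := fun y =>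
    (hasDerivAt_duhamel hvc y).sub ((hasDerivAt_duhamel hec y).const_mul r)
  have h₂ : ∀ y, HasDerivAt (fun y => (-k * φ₀ y + v y) - r * (-k * H y + e y))
      ((k ^ 2 * φ₀ y - g y) - r * (k ^ 2 * H y - 0)) y := fun y =>
    (hasDerivAt_neg_mul_duhamel_add hvc hv y).sub
      ((hasDerivAt_neg_mul_duhamel_add hec he y).const_mul r)
  refine ⟨_, contDiff_two_of_hasDerivAt h₁ h₂ ?_, by simp [φ₀, H, duhamel_neg_one], ?_,
    fun y => ?_⟩
  · exact ((continuous_const.mul (continuous_duhamel hvc)).sub hg).sub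
      (continuous_const.mul ((continuous_const.mul (continuous_duhamel hec)).sub continuous_const))
  · simp [r, hH]
  · rw [deriv_deriv_of_hasDerivAt h₁ h₂]
    ring

section Elliptic

variable {k : ℝ} {φ g : ℝ → ℂ}

lemma integral_mul_conj_eq_energy (hφ : ContDiff ℝ 2 φ) (hl : φ (-1) = 0) (hr : φ 1 = 0)
    (heq : ∀ y ∈ Icc (-1 : ℝ) 1, deriv (deriv φ) y - (k : ℂ) ^ 2 * φ y = -g y) :
    ∫ y in (-1 : ℝ)..1, g y * conj (φ y) = ((k ^ 2 * L2sq φ + L2sq (deriv φ) : ℝ) : ℂ) := by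
  have hφc : Continuous fun y => conj (φ y) := continuous_conj.comp hφ.continuous
  have hφ₀ := hφ.continuous
  have hφ₂ := hφ.continuous_deriv_deriv
  calc ∫ y in (-1 : ℝ)..1, g y * conj (φ y)
      = ∫ y in (-1 : ℝ)..1, ((k : ℂ) ^ 2 * (φ y * conj (φ y)) -
          deriv (deriv φ) y * conj (φ y)) := by
        refine integral_congr fun y hy => ?_
        rw [uIcc_of_le (by norm_num)] at hy
        linear_combination conj (φ y) * heq y hy
    _ = _ := by
        rw [integral_sub (Continuous.intervalIntegrable (by fun_prop) _ _)
          (Continuous.intervalIntegrable (by fun_prop) _ _), intervalIntegral.integral_const_mul,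
          integral_mul_conj_eq_L2sq, integral_deriv_deriv_mul_conj hφ hl hr]
        push_cast
        ring

lemma energy_le_L2norm_mul_L2norm (hφ : ContDiff ℝ 2 φ) (hg : Continuous g) (hl : φ (-1) = 0)
    (hr : φ 1 = 0)
    (heq : ∀ y ∈ Icc (-1 : ℝ) 1, deriv (deriv φ) y - (k : ℂ) ^ 2 * φ y = -g y) :
    k ^ 2 * L2norm φ ^ 2 + L2norm (deriv φ) ^ 2 ≤ L2norm g * L2norm φ := by
  have hcs := norm_integral_mul_le hg (continuous_conj.comp hφ.continuous)
  rw [Function.comp_def, integral_mul_conj_eq_energy hφ hl hr heq, norm_real,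
    L2norm_congr_norm (b := φ) fun y => RCLike.norm_conj _] at hcs
  rw [L2norm_sq, L2norm_sq]
  exact (Real.le_norm_self _).trans hcs

lemma L2sq_deriv_deriv_le (hφ : ContDiff ℝ 2 φ) (hg : Continuous g)
    (heq : ∀ y ∈ Icc (-1 : ℝ) 1, deriv (deriv φ) y - (k : ℂ) ^ 2 * φ y = -g y) :
    L2sq (deriv (deriv φ)) ≤ 2 * (k ^ 2) ^ 2 * L2sq φ + 2 * L2sq g := by
  have hφ₀ := hφ.continuous
  have hφ₂ := hφ.continuous_deriv_deriv
  have hpt : ∀ y ∈ Icc (-1 : ℝ) 1,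
      ‖deriv (deriv φ) y‖ ^ 2 ≤ 2 * (k ^ 2) ^ 2 * ‖φ y‖ ^ 2 + 2 * ‖g y‖ ^ 2 := fun y hy => by
    have hle : ‖deriv (deriv φ) y‖ ≤ k ^ 2 * ‖φ y‖ + ‖g y‖ := by
      rw [show deriv (deriv φ) y = (k : ℂ) ^ 2 * φ y - g y by linear_combination heq y hy]
      refine (norm_sub_le _ _).trans_eq ?_
      rw [norm_mul, norm_pow, norm_real, Real.norm_eq_abs, sq_abs]
    nlinarith [norm_nonneg (deriv (deriv φ) y), sq_nonneg (k ^ 2 * ‖φ y‖ - ‖g y‖),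
      norm_nonneg (φ y), norm_nonneg (g y)]
  calc L2sq (deriv (deriv φ))
      ≤ ∫ y in (-1 : ℝ)..1, (2 * (k ^ 2) ^ 2 * ‖φ y‖ ^ 2 + 2 * ‖g y‖ ^ 2) :=
        integral_mono_on (by norm_num) (Continuous.intervalIntegrable (by fun_prop) _ _)
          (Continuous.intervalIntegrable (by fun_prop) _ _) hpt
    _ = _ := by
        rw [integral_add (Continuous.intervalIntegrable (by fun_prop) _ _)
          (Continuous.intervalIntegrable (by fun_prop) _ _),
          intervalIntegral.integral_const_mul, intervalIntegral.integral_const_mul]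
        rfl

theorem elliptic_estimate (hφ : ContDiff ℝ 2 φ) (hg : Continuous g) (hl : φ (-1) = 0)
    (hr : φ 1 = 0) (heq : ∀ y ∈ Icc (-1 : ℝ) 1, deriv (deriv φ) y - (k : ℂ) ^ 2 * φ y = -g y) :
    k ^ 2 * L2norm φ ≤ L2norm g ∧ |k| * L2norm (deriv φ) ≤ L2norm g ∧
      L2norm (deriv (deriv φ)) ≤ 2 * L2norm g := by
  have hE := energy_le_L2norm_mul_L2norm hφ hg hl hr heq
  have hA := L2norm_nonneg φ
  have hB := L2norm_nonneg (deriv φ)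
  have hG := L2norm_nonneg g
  have h0 : k ^ 2 * L2norm φ ≤ L2norm g := by
    nlinarith [sq_nonneg k, sq_nonneg (L2norm (deriv φ))]
  refine ⟨h0, ?_, ?_⟩
  · refine (pow_le_pow_iff_left₀ (by positivity) hG two_ne_zero).1 ?_
    rw [mul_pow, sq_abs]
    nlinarith [mul_le_mul_of_nonneg_left hE (sq_nonneg k), mul_le_mul_of_nonneg_left h0 hG,
      sq_nonneg (k ^ 2 * L2norm φ)]
  · have h₂ := L2sq_deriv_deriv_le hφ hg heq
    rw [← L2norm_sq φ, ← L2norm_sq g] at h₂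
    rw [L2norm, Real.sqrt_le_iff]
    exact ⟨by positivity, by nlinarith [mul_self_le_mul_self (by positivity) h0]⟩

end Elliptic

/-- Self-adjointness of `∂² - k²` under Dirichlet conditions. -/
theorem integral_mul_dual_eq_L2sq {k : ℝ} {ψ w χ : ℝ → ℂ} (hψ : ContDiff ℝ 2 ψ)
    (hw : Continuous w) (hχ : ContDiff ℝ 2 χ) (hψl : ψ (-1) = 0) (hψr : ψ 1 = 0)
    (hχl : χ (-1) = 0) (hχr : χ 1 = 0)
    (hψeq : ∀ y ∈ Icc (-1 : ℝ) 1, deriv (deriv ψ) y - (k : ℂ) ^ 2 * ψ y = -w y)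
    (hχeq : ∀ y ∈ Icc (-1 : ℝ) 1, deriv (deriv χ) y - (k : ℂ) ^ 2 * χ y = -conj (ψ y)) :
    ∫ y in (-1 : ℝ)..1, w y * χ y = L2sq ψ := by
  have hψ₀ := hψ.continuous
  have hχ₀ := hχ.continuous
  rw [← integral_mul_conj_eq_L2sq, ← sub_eq_zero, ← integral_sub
    (Continuous.intervalIntegrable (by fun_prop) _ _)
    (Continuous.intervalIntegrable (by fun_prop) _ _)]
  calc ∫ y in (-1 : ℝ)..1, (w y * χ y - ψ y * conj (ψ y))
      = ∫ y in (-1 : ℝ)..1, (ψ y * deriv (deriv χ) y - deriv (deriv ψ) y * χ y) := by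
        refine integral_congr fun y hy => ?_
        rw [uIcc_of_le (by norm_num)] at hy
        linear_combination χ y * hψeq y hy - ψ y * hχeq y hy
    _ = 0 := by
        rw [integral_mul_deriv_deriv_sub_deriv_deriv_mul hψ hχ, hψl, hψr, hχl, hχr]
        ring

theorem integral_cexp_mul_deriv_deriv (c : ℂ) {u : ℝ → ℂ} (hu : ContDiff ℝ 2 u)
    (hl : u (-1) = 0) (hr : u 1 = 0) (hl' : deriv u (-1) = 0) (hr' : deriv u 1 = 0) :
    ∫ y in (-1 : ℝ)..1, exp (c * y) * deriv (deriv u) y =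
      c ^ 2 * ∫ y in (-1 : ℝ)..1, exp (c * y) * u y := by
  have he₁ := hasDerivAt_cexp_mul c
  have he₂ : ∀ y : ℝ, HasDerivAt (fun y : ℝ => c * exp (c * y)) (c * (c * exp (c * y))) y :=
    fun y => (he₁ y).const_mul c
  have he := contDiff_two_of_hasDerivAt he₁ he₂ (by fun_prop)
  have hgreen := integral_mul_deriv_deriv_sub_deriv_deriv_mul he hu (-1) 1
  rw [deriv_deriv_of_hasDerivAt he₁ he₂, hl, hr, hl', hr'] at hgreen
  rw [← intervalIntegral.integral_const_mul, ← sub_eq_zero, ← integral_sub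
    (Continuous.intervalIntegrable (by fun_prop) _ _)
    (Continuous.intervalIntegrable (by fun_prop) _ _)]
  simp only [mul_zero, sub_zero] at hgreen
  exact (integral_congr fun y _ => by ring).trans hgreen

lemma L2norm_mul_of_norm_eq_one {e a : ℝ → ℂ} (he₁ : ∀ y, ‖e y‖ = 1) :
    L2norm (fun y => e y * a y) = L2norm a :=
  L2norm_congr_norm fun y => by rw [norm_mul, he₁, one_mul]

theorem norm_integral_mul_deriv_deriv_mul_le {e f χ : ℝ → ℂ} (he : Continuous e)
    (he₁ : ∀ y, ‖e y‖ = 1) (hf : ContDiff ℝ 2 f) (hχ : ContDiff ℝ 2 χ) :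
    ‖∫ y in (-1 : ℝ)..1, e y * deriv (deriv fun y => f y * χ y) y‖ ≤
      L2norm (deriv (deriv f)) * L2norm χ + 2 * (L2norm (deriv f) * L2norm (deriv χ)) +
        L2norm f * L2norm (deriv (deriv χ)) := by
  have hf₀ := hf.continuous
  have hf₁ := hf.continuous_deriv one_le_two
  have hf₂ := hf.continuous_deriv_deriv
  have hχ₀ := hχ.continuous
  have hχ₁ := hχ.continuous_deriv one_le_two
  have hχ₂ := hχ.continuous_deriv_deriv
  have hcs : ∀ {a b : ℝ → ℂ}, Continuous a → Continuous b →
      ‖∫ y in (-1 : ℝ)..1, e y * a y * b y‖ ≤ L2norm a * L2norm b := fun ha hb =>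
    (norm_integral_mul_le (a := fun y => e y * _) (he.mul ha) hb).trans_eq
      (by rw [L2norm_mul_of_norm_eq_one he₁])
  rw [deriv_deriv_mul hf hχ]
  calc ‖∫ y in (-1 : ℝ)..1, e y * (deriv (deriv f) y * χ y + 2 * (deriv f y * deriv χ y) +
          f y * deriv (deriv χ) y)‖
      = ‖(∫ y in (-1 : ℝ)..1, e y * deriv (deriv f) y * χ y) +
          2 * (∫ y in (-1 : ℝ)..1, e y * deriv f y * deriv χ y) +
          ∫ y in (-1 : ℝ)..1, e y * f y * deriv (deriv χ) y‖ := by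
        rw [← intervalIntegral.integral_const_mul, ← integral_add, ← integral_add]
        · congr 1
          exact integral_congr fun y _ => by ring
        all_goals exact Continuous.intervalIntegrable (by fun_prop) _ _
    _ ≤ _ := by
        refine (norm_add₃_le).trans ?_
        rw [norm_mul, RCLike.norm_ofNat]
        gcongr
        exacts [hcs hf₂ hχ₀, hcs hf₁ hχ₁, hcs hf₀ hχ₂]

/-- The paper's `‖(∂_y, a)² h‖`. -/
noncomputable def weightedNorm (a : ℝ) (h : ℝ → ℂ) : ℝ :=
  √(L2sq (deriv (deriv h)) + a ^ 2 * L2sq (deriv h) + a ^ 4 * L2sq h)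

lemma le_weightedNorm (a : ℝ) (h : ℝ → ℂ) :
    L2norm (deriv (deriv h)) ≤ weightedNorm a h ∧ |a| * L2norm (deriv h) ≤ weightedNorm a h ∧
      a ^ 2 * L2norm h ≤ weightedNorm a h := by
  have h₂ := L2sq_nonneg (deriv (deriv h))
  have h₁ := mul_nonneg (sq_nonneg a) (L2sq_nonneg (deriv h))
  have h₀ := mul_nonneg (by positivity : (0 : ℝ) ≤ a ^ 4) (L2sq_nonneg h)
  have hsum : 0 ≤ L2sq (deriv (deriv h)) + a ^ 2 * L2sq (deriv h) + a ^ 4 * L2sq h := by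
    linarith
  refine ⟨Real.sqrt_le_sqrt (by linarith), ?_, ?_⟩ <;>
    rw [weightedNorm, Real.le_sqrt (by positivity [L2norm_nonneg h, L2norm_nonneg (deriv h)]) hsum,
      mul_pow, L2norm_sq]
  · rw [sq_abs]
    linarith
  · linear_combination h₂ + h₁

section Phase

variable (k t : ℝ) (w : ℝ → ℂ)

lemma norm_ew (y : ℝ) : ‖ew k t w y‖ = ‖w y‖ := by
  rw [ew, norm_mul, show I * k * y * t = I * ((k * y * t : ℝ) : ℂ) by push_cast; ring,
    norm_exp_I_mul_ofReal, one_mul]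

lemma L2sq_ew : L2sq (ew k t w) = L2sq w := by
  simp only [L2sq, norm_ew]

lemma cexp_mul_ew (y : ℝ) : exp (-(I * k * t) * y) * ew k t w y = w y := by
  rw [ew, ← mul_assoc, ← exp_add, show -(I * k * t) * y + I * k * y * t = 0 by ring, exp_zero,
    one_mul]

lemma norm_cexp_neg_I_mul (y : ℝ) : ‖exp (-(I * k * t) * y)‖ = 1 := by
  rw [show -(I * k * t) * y = I * ((-(k * t * y) : ℝ) : ℂ) by push_cast; ring,
    norm_exp_I_mul_ofReal]

end Phase

lemma contDiff_ew (k t : ℝ) {w : ℝ → ℂ} (hw : ContDiff ℝ 2 w) : ContDiff ℝ 2 (ew k t w) :=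
  (((contDiff_const.mul ofRealCLM.contDiff).mul contDiff_const).cexp).mul hw

theorem sq_mul_L2sq_le_of_dual {k t : ℝ} {ψ w χ : ℝ → ℂ} (hψ : ContDiff ℝ 2 ψ)
    (hw : ContDiff ℝ 2 w) (hχ : ContDiff ℝ 2 χ) (hψl : ψ (-1) = 0) (hψr : ψ 1 = 0)
    (hwl : w (-1) = 0) (hwr : w 1 = 0) (hχl : χ (-1) = 0) (hχr : χ 1 = 0)
    (hψeq : ∀ y ∈ Icc (-1 : ℝ) 1, deriv (deriv ψ) y - (k : ℂ) ^ 2 * ψ y = -w y)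
    (hχeq : ∀ y ∈ Icc (-1 : ℝ) 1, deriv (deriv χ) y - (k : ℂ) ^ 2 * χ y = -conj (ψ y)) :
    (k * t) ^ 2 * L2sq ψ ≤ L2norm (deriv (deriv (ew k t w))) * L2norm χ +
      2 * (L2norm (deriv (ew k t w)) * L2norm (deriv χ)) + L2norm w * L2norm (deriv (deriv χ)) := by
  set c : ℂ := -(I * k * t)
  have hf := contDiff_ew k t hw
  have hfl : ew k t w (-1) = 0 := by simp [ew, hwl]
  have hfr : ew k t w 1 = 0 := by simp [ew, hwr]
  have hosc := integral_cexp_mul_deriv_deriv c (hf.mul hχ) (by simp [hχl]) (by simp [hχr])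
    (by rw [deriv_mul_of_contDiff_two hf hχ, hfl, hχl]; ring)
    (by rw [deriv_mul_of_contDiff_two hf hχ, hfr, hχr]; ring)
  have hphase : ∫ y in (-1 : ℝ)..1, exp (c * y) * (ew k t w y * χ y) =
      ∫ y in (-1 : ℝ)..1, w y * χ y :=
    integral_congr fun y _ => by rw [← mul_assoc, cexp_mul_ew]
  have hbound := norm_integral_mul_deriv_deriv_mul_le (by fun_prop) (norm_cexp_neg_I_mul k t) hf hχ
  rw [hosc, hphase, integral_mul_dual_eq_L2sq hψ hw.continuous hχ hψl hψr hχl hχr hψeq hχeq,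
    L2norm_congr_norm (norm_ew k t w)] at hbound
  refine le_of_eq_of_le ?_ hbound
  rw [norm_mul, norm_pow, norm_real, Real.norm_of_nonneg (L2sq_nonneg ψ)]
  simp [c, mul_pow]

theorem pow_four_mul_L2norm_le {k : ℝ} (t : ℝ) {ψ w : ℝ → ℂ} (hψ : ContDiff ℝ 2 ψ)
    (hw : ContDiff ℝ 2 w) (hψl : ψ (-1) = 0) (hψr : ψ 1 = 0)
    (hψeq : ∀ y ∈ Icc (-1 : ℝ) 1, deriv (deriv ψ) y - (k : ℂ) ^ 2 * ψ y = -w y) :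
    k ^ 4 * L2norm ψ ≤ weightedNorm k (ew k t w) := by
  have hψw := (elliptic_estimate hψ hw.continuous hψl hψr hψeq).1
  have hw := (le_weightedNorm k (ew k t w)).2.2
  rw [L2norm_congr_norm (norm_ew k t w)] at hw
  calc k ^ 4 * L2norm ψ = k ^ 2 * (k ^ 2 * L2norm ψ) := by ring
    _ ≤ k ^ 2 * L2norm w := by gcongr
    _ ≤ _ := hw

theorem pow_four_mul_sq_mul_L2norm_le {k t : ℝ} {ψ w : ℝ → ℂ} (hψ : ContDiff ℝ 2 ψ)
    (hw : ContDiff ℝ 2 w) (hψl : ψ (-1) = 0) (hψr : ψ 1 = 0) (hwl : w (-1) = 0) (hwr : w 1 = 0)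
    (hψeq : ∀ y ∈ Icc (-1 : ℝ) 1, deriv (deriv ψ) y - (k : ℂ) ^ 2 * ψ y = -w y) :
    k ^ 4 * t ^ 2 * L2norm ψ ≤ 5 * weightedNorm k (ew k t w) := by
  have hψc : Continuous fun y => conj (ψ y) := continuous_conj.comp hψ.continuous
  obtain ⟨χ, hχ, hχl, hχr, hχeq⟩ := exists_dirichlet_solution k hψc
  have hdual := sq_mul_L2sq_le_of_dual (t := t) hψ hw hχ hψl hψr hwl hwr hχl hχr hψeq
    fun y _ => hχeq y
  obtain ⟨hχ₀, hχ₁, hχ₂⟩ := elliptic_estimate hχ hψc hχl hχr fun y _ => hχeq y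
  obtain ⟨hF₂, hF₁, hF₀⟩ := le_weightedNorm k (ew k t w)
  rw [L2norm_congr_norm (b := ψ) fun y => RCLike.norm_conj _] at hχ₀ hχ₁ hχ₂
  rw [L2norm_congr_norm (norm_ew k t w)] at hF₀
  have hS : 0 ≤ weightedNorm k (ew k t w) := Real.sqrt_nonneg _
  have hP := L2norm_nonneg ψ
  have key : k ^ 4 * t ^ 2 * L2norm ψ * L2norm ψ ≤ 5 * weightedNorm k (ew k t w) * L2norm ψ :=
    calc k ^ 4 * t ^ 2 * L2norm ψ * L2norm ψ = k ^ 2 * ((k * t) ^ 2 * L2sq ψ) := by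
          rw [← L2norm_sq]; ring
      _ ≤ k ^ 2 * (L2norm (deriv (deriv (ew k t w))) * L2norm χ +
            2 * (L2norm (deriv (ew k t w)) * L2norm (deriv χ)) +
            L2norm w * L2norm (deriv (deriv χ))) := by gcongr
      _ = L2norm (deriv (deriv (ew k t w))) * (k ^ 2 * L2norm χ) +
            2 * ((|k| * L2norm (deriv (ew k t w))) * (|k| * L2norm (deriv χ))) +
            (k ^ 2 * L2norm w) * L2norm (deriv (deriv χ)) := by
          rw [mul_mul_mul_comm |k|, abs_mul_abs_self]; ring
      _ ≤ weightedNorm k (ew k t w) * L2norm ψ + 2 * (weightedNorm k (ew k t w) * L2norm ψ) +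
            weightedNorm k (ew k t w) * (2 * L2norm ψ) := by
          gcongr ?_ + 2 * ?_ + ?_
          · exact mul_le_mul hF₂ hχ₀ (mul_nonneg (sq_nonneg k) (L2norm_nonneg χ)) hS
          · exact mul_le_mul hF₁ hχ₁ (mul_nonneg (abs_nonneg k) (L2norm_nonneg _)) hS
          · exact mul_le_mul hF₀ hχ₂ (L2norm_nonneg _) hS
      _ = 5 * weightedNorm k (ew k t w) * L2norm ψ := by ring
  rcases hP.eq_or_lt with h | h
  · rw [← h, mul_zero]
    linarith
  · exact le_of_mul_le_mul_right key h

/-- High-frequency inviscid damping estimate: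
`|k|⁴ ‖ψ‖ ≤ C (1+t)^{-2} ‖(∂_y,k)²(e^{ikyt}w)‖` for `|k| ≥ 1`. -/
theorem psi_highfreq_second :
    ∃ C > (0 : ℝ), ∀ (k t : ℝ) (ψ w : ℝ → ℂ),
      1 ≤ |k| → 0 ≤ t →
      ContDiff ℝ 2 ψ → ContDiff ℝ 2 w →
      ψ (-1) = 0 → ψ 1 = 0 → w (-1) = 0 → w 1 = 0 →
      (∀ y ∈ Ioo (-1 : ℝ) 1, deriv (deriv ψ) y - (k : ℂ) ^ 2 * ψ y = -w y) →
      |k| ^ 4 * Real.sqrt (L2sq ψ)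
        ≤ C * ((1 + t) ^ 2)⁻¹ * Real.sqrt
            (L2sq (deriv (deriv (ew k t w))) + k ^ 2 * L2sq (deriv (ew k t w))
              + k ^ 4 * L2sq w) := by
  refine ⟨12, by norm_num, fun k t ψ w _ _ hψ hw hψl hψr hwl hwr hode => ?_⟩
  have hψeq : ∀ y ∈ Icc (-1 : ℝ) 1, deriv (deriv ψ) y - (k : ℂ) ^ 2 * ψ y = -w y := by
    have h₀ := hψ.continuous
    have h₂ := hψ.continuous_deriv_deriv
    have h := hw.continuous
    exact EqOn.of_subset_closure hode (by fun_prop) (by fun_prop) Ioo_subset_Icc_self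
      (by rw [closure_Ioo (by norm_num)])
  have hlow := pow_four_mul_L2norm_le t hψ hw hψl hψr hψeq
  have hhigh := pow_four_mul_sq_mul_L2norm_le (t := t) hψ hw hψl hψr hwl hwr hψeq
  rw [← L2sq_ew k t w, ← weightedNorm, ← L2norm, Even.pow_abs (by decide),
    mul_assoc, ← div_eq_inv_mul, mul_div_assoc', le_div_iff₀ (by positivity)]
  nlinarith [mul_nonneg (sq_nonneg (t - 1)) (mul_nonneg (by positivity : (0 : ℝ) ≤ k ^ 4)
    (L2norm_nonneg ψ))]
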